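/- arXiv:cs/0501065 — 4 statements merged into one kernel-verified Lean document; each statement's English description precedes it below -/
import Mathlib

section
/- Let N ≥ 2, K = ⌊(N−1)/2⌋, and let U : Fin N → ℝ have real Fourier coefficients a_k = (2/N) Σ_{t=0}^{N−1} U_t cos(2πkt/N) and b_k = (2/N) Σ_{t=0}^{N−1} U_t sin(2πkt/N). For real parameters λ_1,…,λ_K, r, ψ, let M be the circulant matrix with entries M_{l,j} = (2/N) Σ_{k=1}^{K} λ_k r^k exp(i k (2π(l−j)/N + ψ)), and set a'_k = λ_k r^k (a_k cos(kψ) + b_k sin(kψ)) and b'_k = λ_k r^k (b_k cos(kψ) − a_k sin(kψ)). Then for every j, (M·U)_j = Σ_{k=1}^{K} (a'_k cos(2πkj/N) + b'_k sin(2πkj/N)) + i·Σ_{k=1}^{K} (−b'_k cos(2πkj/N) + a'_k sin(2πkj/N)). -/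
open Finset Complex

private lemma sumsplit {ι : Type*} (s : Finset ι) (f g : ι → ℝ) (P Q : ℝ) :
    ∑ i ∈ s, (P * f i + Q * g i) = P * ∑ i ∈ s, f i + Q * ∑ i ∈ s, g i := by
  rw [Finset.sum_add_distrib, Finset.mul_sum, Finset.mul_sum]

theorem stmt_1 (N : ℕ) (hN : 2 ≤ N) (lam : ℕ → ℝ) (r ψ : ℝ) (U : Fin N → ℝ)
    (a b a' b' : ℕ → ℝ)
    (ha : ∀ k : ℕ, a k = (2 / (N : ℝ)) * ∑ t : Fin N,
      U t * Real.cos (2 * Real.pi * (k : ℝ) * ((t : ℕ) : ℝ) / (N : ℝ)))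
    (hb : ∀ k : ℕ, b k = (2 / (N : ℝ)) * ∑ t : Fin N,
      U t * Real.sin (2 * Real.pi * (k : ℝ) * ((t : ℕ) : ℝ) / (N : ℝ)))
    (M : Fin N → Fin N → ℂ)
    (hM : ∀ l j : Fin N, M l j =
      (2 / (N : ℂ)) * ∑ k ∈ Finset.Icc 1 ((N - 1) / 2),
        ((lam k * r ^ k : ℝ) : ℂ) *
          Complex.exp (Complex.I * (k : ℂ) *
            (2 * (Real.pi : ℂ) * (((l : ℕ) : ℂ) - ((j : ℕ) : ℂ)) / (N : ℂ) + (ψ : ℂ))))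
    (ha' : ∀ k : ℕ, a' k = lam k * r ^ k * (a k * Real.cos (k * ψ) + b k * Real.sin (k * ψ)))
    (hb' : ∀ k : ℕ, b' k = lam k * r ^ k * (b k * Real.cos (k * ψ) - a k * Real.sin (k * ψ))) :
    ∀ j : Fin N,
      (∑ l : Fin N, M j l * ((U l : ℝ) : ℂ)) =
        ((∑ k ∈ Finset.Icc 1 ((N - 1) / 2),
            (a' k * Real.cos (2 * Real.pi * (k : ℝ) * ((j : ℕ) : ℝ) / (N : ℝ)) +
             b' k * Real.sin (2 * Real.pi * (k : ℝ) * ((j : ℕ) : ℝ) / (N : ℝ))) : ℝ) : ℂ) +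
        Complex.I *
          ((∑ k ∈ Finset.Icc 1 ((N - 1) / 2),
            (-(b' k) * Real.cos (2 * Real.pi * (k : ℝ) * ((j : ℕ) : ℝ) / (N : ℝ)) +
             a' k * Real.sin (2 * Real.pi * (k : ℝ) * ((j : ℕ) : ℝ) / (N : ℝ))) : ℝ) : ℂ) := by
  intro j
  -- the real angle θ k l
  have key : (∑ l : Fin N, M j l * ((U l : ℝ) : ℂ)) =
      ((∑ k ∈ Finset.Icc 1 ((N - 1) / 2), ∑ l : Fin N,
        (2 / (N : ℝ) * (lam k * r ^ k) * U l *
          Real.cos (2 * Real.pi * (k : ℝ) * ((j : ℕ) : ℝ) / (N : ℝ)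
            - 2 * Real.pi * (k : ℝ) * ((l : ℕ) : ℝ) / (N : ℝ) + (k : ℝ) * ψ)) : ℝ) : ℂ) +
      ((∑ k ∈ Finset.Icc 1 ((N - 1) / 2), ∑ l : Fin N,
        (2 / (N : ℝ) * (lam k * r ^ k) * U l *
          Real.sin (2 * Real.pi * (k : ℝ) * ((j : ℕ) : ℝ) / (N : ℝ)
            - 2 * Real.pi * (k : ℝ) * ((l : ℕ) : ℝ) / (N : ℝ) + (k : ℝ) * ψ)) : ℝ) : ℂ) * Complex.I := by
    have h2 : (∑ k ∈ Finset.Icc 1 ((N - 1) / 2), ∑ l : Fin N,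
        (((2 / (N : ℝ) * (lam k * r ^ k) * U l *
          Real.cos (2 * Real.pi * (k : ℝ) * ((j : ℕ) : ℝ) / (N : ℝ)
            - 2 * Real.pi * (k : ℝ) * ((l : ℕ) : ℝ) / (N : ℝ) + (k : ℝ) * ψ) : ℝ) : ℂ) +
        (((2 / (N : ℝ) * (lam k * r ^ k) * U l *
          Real.sin (2 * Real.pi * (k : ℝ) * ((j : ℕ) : ℝ) / (N : ℝ)
            - 2 * Real.pi * (k : ℝ) * ((l : ℕ) : ℝ) / (N : ℝ) + (k : ℝ) * ψ) : ℝ) : ℂ)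
          * Complex.I))) =
        ((∑ k ∈ Finset.Icc 1 ((N - 1) / 2), ∑ l : Fin N,
          (2 / (N : ℝ) * (lam k * r ^ k) * U l *
            Real.cos (2 * Real.pi * (k : ℝ) * ((j : ℕ) : ℝ) / (N : ℝ)
              - 2 * Real.pi * (k : ℝ) * ((l : ℕ) : ℝ) / (N : ℝ) + (k : ℝ) * ψ)) : ℝ) : ℂ) +
        ((∑ k ∈ Finset.Icc 1 ((N - 1) / 2), ∑ l : Fin N,
          (2 / (N : ℝ) * (lam k * r ^ k) * U l *
            Real.sin (2 * Real.pi * (k : ℝ) * ((j : ℕ) : ℝ) / (N : ℝ)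
              - 2 * Real.pi * (k : ℝ) * ((l : ℕ) : ℝ) / (N : ℝ) + (k : ℝ) * ψ)) : ℝ) : ℂ)
          * Complex.I := by
      simp only [Finset.sum_add_distrib, ← Finset.sum_mul, ← Complex.ofReal_sum]
    rw [← h2]
    simp only [hM, Finset.mul_sum, Finset.sum_mul]
    rw [Finset.sum_comm]
    refine Finset.sum_congr rfl fun k _ => ?_
    refine Finset.sum_congr rfl fun l _ => ?_
    have harg : Complex.I * (k : ℂ) *
        (2 * (Real.pi : ℂ) * (((j : ℕ) : ℂ) - ((l : ℕ) : ℂ)) / (N : ℂ) + (ψ : ℂ)) =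
        ((2 * Real.pi * (k : ℝ) * ((j : ℕ) : ℝ) / (N : ℝ)
            - 2 * Real.pi * (k : ℝ) * ((l : ℕ) : ℝ) / (N : ℝ) + (k : ℝ) * ψ : ℝ) : ℂ) *
          Complex.I := by
      push_cast
      ring
    rw [harg, Complex.exp_mul_I, ← Complex.ofReal_cos, ← Complex.ofReal_sin]
    push_cast
    ring
  rw [key]
  have hre : ∀ k ∈ Finset.Icc 1 ((N - 1) / 2),
      (∑ l : Fin N, (2 / (N : ℝ) * (lam k * r ^ k) * U l *
        Real.cos (2 * Real.pi * (k : ℝ) * ((j : ℕ) : ℝ) / (N : ℝ)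
          - 2 * Real.pi * (k : ℝ) * ((l : ℕ) : ℝ) / (N : ℝ) + (k : ℝ) * ψ))) =
      a' k * Real.cos (2 * Real.pi * (k : ℝ) * ((j : ℕ) : ℝ) / (N : ℝ)) +
        b' k * Real.sin (2 * Real.pi * (k : ℝ) * ((j : ℕ) : ℝ) / (N : ℝ)) := by
    intro k _
    have h1 : a' k * Real.cos (2 * Real.pi * (k : ℝ) * ((j : ℕ) : ℝ) / (N : ℝ)) +
        b' k * Real.sin (2 * Real.pi * (k : ℝ) * ((j : ℕ) : ℝ) / (N : ℝ)) =
        (2 / (N : ℝ) * (lam k * r ^ k) *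
          (Real.cos (2 * Real.pi * (k : ℝ) * ((j : ℕ) : ℝ) / (N : ℝ)) * Real.cos ((k : ℝ) * ψ)
            - Real.sin (2 * Real.pi * (k : ℝ) * ((j : ℕ) : ℝ) / (N : ℝ)) * Real.sin ((k : ℝ) * ψ))) *
          (∑ t : Fin N, U t * Real.cos (2 * Real.pi * (k : ℝ) * ((t : ℕ) : ℝ) / (N : ℝ))) +
        (2 / (N : ℝ) * (lam k * r ^ k) *
          (Real.sin (2 * Real.pi * (k : ℝ) * ((j : ℕ) : ℝ) / (N : ℝ)) * Real.cos ((k : ℝ) * ψ)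
            + Real.cos (2 * Real.pi * (k : ℝ) * ((j : ℕ) : ℝ) / (N : ℝ)) * Real.sin ((k : ℝ) * ψ))) *
          (∑ t : Fin N, U t * Real.sin (2 * Real.pi * (k : ℝ) * ((t : ℕ) : ℝ) / (N : ℝ))) := by
      rw [ha', hb', ha, hb]
      push_cast
      ring
    rw [h1, ← sumsplit]
    refine Finset.sum_congr rfl fun l _ => ?_
    rw [Real.cos_add, Real.cos_sub, Real.sin_sub]
    ring
  have him : ∀ k ∈ Finset.Icc 1 ((N - 1) / 2),
      (∑ l : Fin N, (2 / (N : ℝ) * (lam k * r ^ k) * U l *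
        Real.sin (2 * Real.pi * (k : ℝ) * ((j : ℕ) : ℝ) / (N : ℝ)
          - 2 * Real.pi * (k : ℝ) * ((l : ℕ) : ℝ) / (N : ℝ) + (k : ℝ) * ψ))) =
      -(b' k) * Real.cos (2 * Real.pi * (k : ℝ) * ((j : ℕ) : ℝ) / (N : ℝ)) +
        a' k * Real.sin (2 * Real.pi * (k : ℝ) * ((j : ℕ) : ℝ) / (N : ℝ)) := by
    intro k _
    have h1 : -(b' k) * Real.cos (2 * Real.pi * (k : ℝ) * ((j : ℕ) : ℝ) / (N : ℝ)) +
        a' k * Real.sin (2 * Real.pi * (k : ℝ) * ((j : ℕ) : ℝ) / (N : ℝ)) =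
        (2 / (N : ℝ) * (lam k * r ^ k) *
          (Real.sin (2 * Real.pi * (k : ℝ) * ((j : ℕ) : ℝ) / (N : ℝ)) * Real.cos ((k : ℝ) * ψ)
            + Real.cos (2 * Real.pi * (k : ℝ) * ((j : ℕ) : ℝ) / (N : ℝ)) * Real.sin ((k : ℝ) * ψ))) *
          (∑ t : Fin N, U t * Real.cos (2 * Real.pi * (k : ℝ) * ((t : ℕ) : ℝ) / (N : ℝ))) +
        (2 / (N : ℝ) * (lam k * r ^ k) *
          (-(Real.cos (2 * Real.pi * (k : ℝ) * ((j : ℕ) : ℝ) / (N : ℝ)) * Real.cos ((k : ℝ) * ψ))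
            + Real.sin (2 * Real.pi * (k : ℝ) * ((j : ℕ) : ℝ) / (N : ℝ)) * Real.sin ((k : ℝ) * ψ))) *
          (∑ t : Fin N, U t * Real.sin (2 * Real.pi * (k : ℝ) * ((t : ℕ) : ℝ) / (N : ℝ))) := by
      rw [ha', hb', ha, hb]
      push_cast
      ring
    rw [h1, ← sumsplit]
    refine Finset.sum_congr rfl fun l _ => ?_
    rw [Real.sin_add, Real.cos_sub, Real.sin_sub]
    ring
  rw [Finset.sum_congr rfl hre, Finset.sum_congr rfl him]
  ring
end

section
/- Let N ≥ 3 be odd and let H be the real N×N matrix with entries H_{l,j} = (2/N) Σ_{k=1}^{(N−1)/2} sin(2πk(l−j)/N). Then the matrix product H·H has entries (H·H)_{l,j} = 1/N − δ_{l,j}; equivalently, H·H = (1/N)·J − I, where J is the all-ones matrix and I the identity. -/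
open Finset

lemma sumcos_aux (N : ℕ) (hN : 0 < N) (θ : ℝ) (c : ℤ) :
    ∑ t ∈ Finset.range N, Real.cos (θ + 2 * Real.pi * (c : ℝ) * (t : ℝ) / (N : ℝ)) =
      if (N : ℤ) ∣ c then (N : ℝ) * Real.cos θ else 0 := by
  have hNR : (N : ℝ) ≠ 0 := Nat.cast_ne_zero.mpr hN.ne'
  have hNC : (N : ℂ) ≠ 0 := Nat.cast_ne_zero.mpr hN.ne'
  split_ifs with h
  · obtain ⟨e, he⟩ := h
    have hcong : ∀ t ∈ Finset.range N,
        Real.cos (θ + 2 * Real.pi * (c : ℝ) * (t : ℝ) / (N : ℝ)) = Real.cos θ := by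
      intro t _
      have harg : θ + 2 * Real.pi * (c : ℝ) * (t : ℝ) / (N : ℝ)
          = θ + ((e * t : ℤ) : ℝ) * (2 * Real.pi) := by
        subst he; push_cast; field_simp
      rw [harg, Real.cos_add_int_mul_two_pi]
    rw [Finset.sum_congr rfl hcong, Finset.sum_const, Finset.card_range, nsmul_eq_mul]
  · set ζ : ℂ := Complex.exp (2 * (Real.pi : ℂ) * (c : ℂ) / (N : ℂ) * Complex.I) with hζ
    have hζN : ζ ^ N = 1 := by
      rw [hζ, ← Complex.exp_nat_mul]
      have harg : (N : ℂ) * (2 * (Real.pi : ℂ) * (c : ℂ) / (N : ℂ) * Complex.I)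
          = (c : ℤ) * (2 * (Real.pi : ℂ) * Complex.I) := by
        field_simp
      rw [harg, Complex.exp_int_mul_two_pi_mul_I]
    have hζ1 : ζ ≠ 1 := by
      intro hcon
      rw [hζ, Complex.exp_eq_one_iff] at hcon
      obtain ⟨n, hn⟩ := hcon
      apply h
      refine ⟨n, ?_⟩
      have hπ : (Real.pi : ℂ) ≠ 0 := by exact_mod_cast Real.pi_ne_zero
      have hI : Complex.I ≠ 0 := Complex.I_ne_zero
      have h2 : (2 * (Real.pi : ℂ) * Complex.I) * (c : ℂ)
          = (2 * (Real.pi : ℂ) * Complex.I) * ((n : ℂ) * (N : ℂ)) := by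
        field_simp at hn
        linear_combination (2 * (Real.pi : ℂ) * Complex.I) * hn
      have h3 : (c : ℂ) = (n : ℂ) * (N : ℂ) :=
        mul_left_cancel₀ (mul_ne_zero (mul_ne_zero two_ne_zero hπ) hI) h2
      have h4 : c = n * N := by exact_mod_cast h3
      rw [h4]; ring
    have hsum : ∑ t ∈ Finset.range N, ζ ^ t = 0 := by
      rw [geom_sum_eq hζ1, hζN]
      simp
    have key : ∀ t : ℕ, Real.cos (θ + 2 * Real.pi * (c : ℝ) * (t : ℝ) / (N : ℝ))
        = (Complex.exp ((θ : ℝ) * Complex.I) * ζ ^ t).re := by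
      intro t
      have hmul : Complex.exp ((θ : ℝ) * Complex.I) * ζ ^ t
          = Complex.exp (((θ + 2 * Real.pi * (c : ℝ) * (t : ℝ) / (N : ℝ) : ℝ)) * Complex.I) := by
        rw [hζ, ← Complex.exp_nat_mul, ← Complex.exp_add]
        congr 1
        push_cast
        field_simp
      rw [hmul, Complex.exp_ofReal_mul_I_re]
    calc ∑ t ∈ Finset.range N, Real.cos (θ + 2 * Real.pi * (c : ℝ) * (t : ℝ) / (N : ℝ))
        = ∑ t ∈ Finset.range N, (Complex.exp ((θ : ℝ) * Complex.I) * ζ ^ t).re :=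
          Finset.sum_congr rfl fun t _ => key t
      _ = ((Complex.exp ((θ : ℝ) * Complex.I)) * ∑ t ∈ Finset.range N, ζ ^ t).re := by
          rw [Finset.mul_sum, Complex.re_sum]
      _ = 0 := by rw [hsum, mul_zero, Complex.zero_re]

lemma reshuffle (N' : ℕ) (s : Finset ℕ) (c : ℝ) (f g : ℕ → ℕ → ℝ) :
    ∑ t ∈ Finset.range N', (c * ∑ k ∈ s, f k t) * (c * ∑ k' ∈ s, g k' t)
      = c ^ 2 * ∑ k ∈ s, ∑ k' ∈ s, ∑ t ∈ Finset.range N', f k t * g k' t := by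
  have step1 : ∀ t : ℕ, (c * ∑ k ∈ s, f k t) * (c * ∑ k' ∈ s, g k' t)
      = ∑ k ∈ s, ∑ k' ∈ s, c ^ 2 * (f k t * g k' t) := by
    intro t
    have : (c * ∑ k ∈ s, f k t) * (c * ∑ k' ∈ s, g k' t)
        = c ^ 2 * ((∑ k ∈ s, f k t) * (∑ k' ∈ s, g k' t)) := by ring
    rw [this, Finset.sum_mul_sum]
    simp only [Finset.mul_sum]
  rw [Finset.sum_congr rfl fun t _ => step1 t, Finset.sum_comm]
  rw [Finset.mul_sum]
  refine Finset.sum_congr rfl fun k _ => ?_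
  rw [Finset.sum_comm, Finset.mul_sum]
  refine Finset.sum_congr rfl fun k' _ => ?_
  rw [Finset.mul_sum]

theorem stmt_8 (N : ℕ) (hN : 3 ≤ N) (hNodd : Odd N)
    (H : Fin N → Fin N → ℝ)
    (hH : ∀ l j : Fin N, H l j =
      (2 / (N : ℝ)) * ∑ k ∈ Finset.Icc 1 ((N - 1) / 2),
        Real.sin (2 * Real.pi * (k : ℝ) * (((l : ℕ) : ℝ) - ((j : ℕ) : ℝ)) / (N : ℝ))) :
    ∀ l j : Fin N, (∑ t : Fin N, H l t * H t j) =
      1 / (N : ℝ) - (if l = j then (1 : ℝ) else 0) := by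
  intro l j
  have hNpos : 0 < N := by omega
  have hNR : (N : ℝ) ≠ 0 := Nat.cast_ne_zero.mpr hNpos.ne'
  obtain ⟨m, hm⟩ := hNodd
  have hmdef : (N - 1) / 2 = m := by omega
  have hm1 : 1 ≤ m := by omega
  set d : ℤ := ((l : ℕ) : ℤ) - ((j : ℕ) : ℤ) with hd
  have hdx : (d : ℝ) = ((l : ℕ) : ℝ) - ((j : ℕ) : ℝ) := by rw [hd]; push_cast; ring
  have hllt : (l : ℕ) < N := l.isLt
  have hjlt : (j : ℕ) < N := j.isLt
  have hdvd_iff : (N : ℤ) ∣ d ↔ l = j := by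
    constructor
    · intro hdvd
      have h0 : d = 0 := Int.eq_zero_of_dvd_of_natAbs_lt_natAbs hdvd (by omega)
      have : (l : ℕ) = (j : ℕ) := by omega
      exact Fin.ext this
    · intro h; subst h; simp [hd]
  have hsinmul : ∀ a b : ℝ, Real.sin a * Real.sin b
      = (Real.cos (a - b) - Real.cos (a + b)) / 2 := by
    intro a b; rw [Real.cos_sub, Real.cos_add]; ring
  -- inner sum over t
  have inner : ∀ k ∈ Finset.Icc 1 m, ∀ k' ∈ Finset.Icc 1 m,
      ∑ t ∈ Finset.range N,
        Real.sin (2 * Real.pi * (k : ℝ) * (((l : ℕ) : ℝ) - (t : ℝ)) / (N : ℝ)) *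
        Real.sin (2 * Real.pi * (k' : ℝ) * ((t : ℝ) - ((j : ℕ) : ℝ)) / (N : ℝ))
      = if k = k' then -((N : ℝ) / 2) *
          Real.cos (2 * Real.pi * (k : ℝ) * (((l : ℕ) : ℝ) - ((j : ℕ) : ℝ)) / (N : ℝ)) else 0 := by
    intro k hk k' hk'
    rw [Finset.mem_Icc] at hk hk'
    have e1 : ∑ t ∈ Finset.range N,
        Real.cos (2 * Real.pi * (k : ℝ) * (((l : ℕ) : ℝ) - (t : ℝ)) / (N : ℝ)
          - 2 * Real.pi * (k' : ℝ) * ((t : ℝ) - ((j : ℕ) : ℝ)) / (N : ℝ)) = 0 := by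
      have hs := sumcos_aux N hNpos
        (2 * Real.pi * ((k : ℝ) * ((l : ℕ) : ℝ) + (k' : ℝ) * ((j : ℕ) : ℝ)) / (N : ℝ))
        (-((k : ℤ) + (k' : ℤ)))
      rw [if_neg (by
        intro hdvd
        rw [dvd_neg] at hdvd
        have hdd : ((N : ℕ) : ℤ) ∣ ((k + k' : ℕ) : ℤ) := by push_cast; exact hdvd
        have := Nat.le_of_dvd (by omega) (Int.natCast_dvd_natCast.mp hdd)
        omega)] at hs
      rw [← hs]
      refine Finset.sum_congr rfl fun t _ => ?_
      congr 1
      push_cast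
      field_simp
      ring
    by_cases hkk : k = k'
    · subst hkk
      rw [if_pos rfl]
      have e2 : ∀ t ∈ Finset.range N,
          Real.sin (2 * Real.pi * (k : ℝ) * (((l : ℕ) : ℝ) - (t : ℝ)) / (N : ℝ)) *
          Real.sin (2 * Real.pi * (k : ℝ) * ((t : ℝ) - ((j : ℕ) : ℝ)) / (N : ℝ))
          = (Real.cos (2 * Real.pi * (k : ℝ) * (((l : ℕ) : ℝ) - (t : ℝ)) / (N : ℝ)
              - 2 * Real.pi * (k : ℝ) * ((t : ℝ) - ((j : ℕ) : ℝ)) / (N : ℝ))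
            - Real.cos (2 * Real.pi * (k : ℝ) * (((l : ℕ) : ℝ) - ((j : ℕ) : ℝ)) / (N : ℝ))) / 2 := by
        intro t _
        rw [hsinmul]
        have harg : 2 * Real.pi * (k : ℝ) * (((l : ℕ) : ℝ) - (t : ℝ)) / (N : ℝ)
            + 2 * Real.pi * (k : ℝ) * ((t : ℝ) - ((j : ℕ) : ℝ)) / (N : ℝ)
            = 2 * Real.pi * (k : ℝ) * (((l : ℕ) : ℝ) - ((j : ℕ) : ℝ)) / (N : ℝ) := by
          field_simp; ring
        rw [harg]
      rw [Finset.sum_congr rfl e2, ← Finset.sum_div, Finset.sum_sub_distrib, e1,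
        Finset.sum_const, Finset.card_range, nsmul_eq_mul]
      ring
    · rw [if_neg hkk]
      have e3 : ∑ t ∈ Finset.range N,
          Real.cos (2 * Real.pi * (k : ℝ) * (((l : ℕ) : ℝ) - (t : ℝ)) / (N : ℝ)
            + 2 * Real.pi * (k' : ℝ) * ((t : ℝ) - ((j : ℕ) : ℝ)) / (N : ℝ)) = 0 := by
        have hs := sumcos_aux N hNpos
          (2 * Real.pi * ((k : ℝ) * ((l : ℕ) : ℝ) - (k' : ℝ) * ((j : ℕ) : ℝ)) / (N : ℝ))
          ((k' : ℤ) - (k : ℤ))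
        rw [if_neg (by
          intro hdvd
          have h0 : ((k' : ℤ) - (k : ℤ)) = 0 :=
            Int.eq_zero_of_dvd_of_natAbs_lt_natAbs hdvd (by omega)
          omega)] at hs
        rw [← hs]
        refine Finset.sum_congr rfl fun t _ => ?_
        congr 1
        push_cast
        field_simp
        ring
      rw [Finset.sum_congr rfl (fun t _ => hsinmul _ _), ← Finset.sum_div,
        Finset.sum_sub_distrib, e1, e3]
      norm_num
  -- step 1
  have step1 : ∑ t : Fin N, H l t * H t j
      = (2 / (N : ℝ)) ^ 2 * ∑ k ∈ Finset.Icc 1 m, ∑ k' ∈ Finset.Icc 1 m,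
          ∑ t ∈ Finset.range N,
            Real.sin (2 * Real.pi * (k : ℝ) * (((l : ℕ) : ℝ) - (t : ℝ)) / (N : ℝ)) *
            Real.sin (2 * Real.pi * (k' : ℝ) * ((t : ℝ) - ((j : ℕ) : ℝ)) / (N : ℝ)) := by
    rw [← reshuffle N (Finset.Icc 1 m) (2 / (N : ℝ))
      (fun k t => Real.sin (2 * Real.pi * (k : ℝ) * (((l : ℕ) : ℝ) - (t : ℝ)) / (N : ℝ)))
      (fun k' t => Real.sin (2 * Real.pi * (k' : ℝ) * ((t : ℝ) - ((j : ℕ) : ℝ)) / (N : ℝ)))]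
    rw [← Fin.sum_univ_eq_sum_range (fun t : ℕ =>
      (2 / (N : ℝ) * ∑ k ∈ Finset.Icc 1 m,
        Real.sin (2 * Real.pi * (k : ℝ) * (((l : ℕ) : ℝ) - (t : ℝ)) / (N : ℝ))) *
      (2 / (N : ℝ) * ∑ k' ∈ Finset.Icc 1 m,
        Real.sin (2 * Real.pi * (k' : ℝ) * ((t : ℝ) - ((j : ℕ) : ℝ)) / (N : ℝ)))) N]
    refine Finset.sum_congr rfl fun t _ => ?_
    rw [hH l t, hH t j, hmdef]
  -- cosine sum over full range
  have hsumrange : ∑ k ∈ Finset.range N,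
      Real.cos (2 * Real.pi * (k : ℝ) * (((l : ℕ) : ℝ) - ((j : ℕ) : ℝ)) / (N : ℝ))
      = if l = j then (N : ℝ) else 0 := by
    have hs := sumcos_aux N hNpos 0 d
    have hcong : ∑ k ∈ Finset.range N,
        Real.cos (2 * Real.pi * (k : ℝ) * (((l : ℕ) : ℝ) - ((j : ℕ) : ℝ)) / (N : ℝ))
        = ∑ t ∈ Finset.range N, Real.cos (0 + 2 * Real.pi * (d : ℝ) * (t : ℝ) / (N : ℝ)) := by
      refine Finset.sum_congr rfl fun t _ => ?_
      congr 1
      rw [hdx]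
      ring
    rw [hcong, hs, Real.cos_zero, mul_one]
    simp only [hdvd_iff]
  -- reflection
  have hrefl : ∑ k ∈ Finset.Icc 1 m,
      Real.cos (2 * Real.pi * (k : ℝ) * (((l : ℕ) : ℝ) - ((j : ℕ) : ℝ)) / (N : ℝ))
      = ∑ k ∈ Finset.Icc (m + 1) (2 * m),
      Real.cos (2 * Real.pi * (k : ℝ) * (((l : ℕ) : ℝ) - ((j : ℕ) : ℝ)) / (N : ℝ)) := by
    refine Finset.sum_nbij' (i := fun k => N - k) (j := fun k => N - k) ?_ ?_ ?_ ?_ ?_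
    · intro a ha; simp only [Finset.mem_Icc] at ha ⊢; omega
    · intro a ha; simp only [Finset.mem_Icc] at ha ⊢; omega
    · intro a ha; simp only [Finset.mem_Icc] at ha; omega
    · intro a ha; simp only [Finset.mem_Icc] at ha; omega
    · intro a ha
      rw [Finset.mem_Icc] at ha
      have hc : (((N - a : ℕ) : ℝ)) = (N : ℝ) - (a : ℝ) := by
        have : a ≤ N := by omega
        push_cast [this]; ring
      have harg : 2 * Real.pi * ((N - a : ℕ) : ℝ) * (((l : ℕ) : ℝ) - ((j : ℕ) : ℝ)) / (N : ℝ)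
          = -(2 * Real.pi * (a : ℝ) * (((l : ℕ) : ℝ) - ((j : ℕ) : ℝ)) / (N : ℝ)) + (d : ℝ) * (2 * Real.pi) := by
        rw [hc, hdx]
        field_simp
        ring
      rw [harg, Real.cos_add_int_mul_two_pi, Real.cos_neg]
  -- split range N
  have hsplit : ∑ k ∈ Finset.range N,
      Real.cos (2 * Real.pi * (k : ℝ) * (((l : ℕ) : ℝ) - ((j : ℕ) : ℝ)) / (N : ℝ))
      = 1 + (∑ k ∈ Finset.Icc 1 m,
          Real.cos (2 * Real.pi * (k : ℝ) * (((l : ℕ) : ℝ) - ((j : ℕ) : ℝ)) / (N : ℝ))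
        + ∑ k ∈ Finset.Icc (m + 1) (2 * m),
          Real.cos (2 * Real.pi * (k : ℝ) * (((l : ℕ) : ℝ) - ((j : ℕ) : ℝ)) / (N : ℝ))) := by
    have hrange : Finset.range N = insert 0 (Finset.Ioc 0 (2 * m)) := by
      ext a
      simp only [Finset.mem_range, Finset.mem_insert, Finset.mem_Ioc]
      omega
    rw [hrange, Finset.sum_insert (by simp)]
    have h0 : Real.cos (2 * Real.pi * ((0 : ℕ) : ℝ) * (((l : ℕ) : ℝ) - ((j : ℕ) : ℝ)) / (N : ℝ)) = 1 := by
      norm_num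
    rw [h0]
    congr 1
    have hIcc1 : Finset.Icc 1 m = Finset.Ioc 0 m := by
      ext a; simp only [Finset.mem_Icc, Finset.mem_Ioc]; omega
    have hIcc2 : Finset.Icc (m + 1) (2 * m) = Finset.Ioc m (2 * m) := by
      ext a; simp only [Finset.mem_Icc, Finset.mem_Ioc]; omega
    rw [hIcc1, hIcc2]
    exact (Finset.sum_Ioc_consecutive _ (by omega : 0 ≤ m) (by omega : m ≤ 2 * m)).symm
  -- value of T
  have hT : ∑ k ∈ Finset.Icc 1 m,
      Real.cos (2 * Real.pi * (k : ℝ) * (((l : ℕ) : ℝ) - ((j : ℕ) : ℝ)) / (N : ℝ))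
      = ((if l = j then (N : ℝ) else 0) - 1) / 2 := by
    rw [hsumrange] at hsplit
    rw [← hrefl] at hsplit
    split_ifs at hsplit ⊢ <;> linarith
  -- collapse double sum
  have hcollapse : ∑ k ∈ Finset.Icc 1 m, ∑ k' ∈ Finset.Icc 1 m,
      ∑ t ∈ Finset.range N,
        Real.sin (2 * Real.pi * (k : ℝ) * (((l : ℕ) : ℝ) - (t : ℝ)) / (N : ℝ)) *
        Real.sin (2 * Real.pi * (k' : ℝ) * ((t : ℝ) - ((j : ℕ) : ℝ)) / (N : ℝ))
      = ∑ k ∈ Finset.Icc 1 m, -((N : ℝ) / 2) *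
          Real.cos (2 * Real.pi * (k : ℝ) * (((l : ℕ) : ℝ) - ((j : ℕ) : ℝ)) / (N : ℝ)) := by
    refine Finset.sum_congr rfl fun k hk => ?_
    rw [Finset.sum_congr rfl fun k' hk' => inner k hk k' hk']
    rw [Finset.sum_ite_eq, if_pos hk]
  rw [step1, hcollapse, ← Finset.mul_sum, hT]
  split_ifs <;> field_simp <;> ring
end

section
/- Let N ≥ 2, K = ⌊(N−1)/2⌋, and let H be the real N×N matrix with entries H_{l,j} = (2/N) Σ_{k=1}^{K} sin(2πk(l−j)/N). Then for every integer k with 1 ≤ k ≤ K and every l in Fin N, Σ_{j=0}^{N−1} H_{l,j} cos(2πkj/N) = sin(2πkl/N). -/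
open Finset

private lemma exp_sum_zero (N : ℕ) (hN : 0 < N) (a : ℤ) (ha : ¬ (N:ℤ) ∣ a) :
    ∑ j ∈ Finset.range N, Complex.exp (((2 * Real.pi * a * j / N : ℝ) : ℂ) * Complex.I) = 0 := by
  have hNR : (N:ℝ) ≠ 0 := Nat.cast_ne_zero.mpr hN.ne'
  have hNC : (N:ℂ) ≠ 0 := Nat.cast_ne_zero.mpr hN.ne'
  set x : ℂ := Complex.exp (((2 * Real.pi * a / N : ℝ) : ℂ) * Complex.I) with hx
  have hpow : ∀ j : ℕ, Complex.exp (((2 * Real.pi * a * j / N : ℝ) : ℂ) * Complex.I) = x ^ j := by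
    intro j
    rw [hx, ← Complex.exp_nat_mul]
    congr 1
    push_cast
    ring
  have hxN : x ^ N = 1 := by
    rw [hx, ← Complex.exp_nat_mul]
    have h1 : (N:ℂ) * (((2 * Real.pi * a / N : ℝ) : ℂ) * Complex.I)
        = (a:ℂ) * (2 * (Real.pi:ℂ) * Complex.I) := by
      push_cast
      field_simp
    rw [h1]
    exact_mod_cast Complex.exp_int_mul_two_pi_mul_I a
  have hx1 : x ≠ 1 := by
    intro h
    rw [hx, Complex.exp_eq_one_iff] at h
    obtain ⟨n, hn⟩ := h
    apply ha
    have h3 : 2 * Real.pi * a / N = n * (2 * Real.pi) := by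
      have := congrArg Complex.im hn
      simpa using this
    have h4 : (a : ℝ) = n * N := by
      field_simp at h3
      have h5 : (2*Real.pi) * (a:ℝ) = (2*Real.pi) * ((n:ℝ)*N) := by linear_combination (2*Real.pi) * h3
      exact mul_left_cancel₀ (by positivity : (2*Real.pi) ≠ 0) h5
    refine ⟨n, ?_⟩
    have : (a:ℝ) = (((N * n : ℤ)):ℝ) := by push_cast; linarith [h4]
    exact_mod_cast this
  calc ∑ j ∈ Finset.range N, Complex.exp (((2 * Real.pi * a * j / N : ℝ) : ℂ) * Complex.I)
      = ∑ j ∈ Finset.range N, x ^ j := Finset.sum_congr rfl fun j _ => hpow j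
    _ = (x ^ N - 1) / (x - 1) := geom_sum_eq hx1 N
    _ = 0 := by rw [hxN]; simp

private lemma cos_sum_zero (N : ℕ) (hN : 0 < N) (a : ℤ) (ha : ¬ (N:ℤ) ∣ a) :
    ∑ j ∈ Finset.range N, Real.cos (2 * Real.pi * a * j / N) = 0 := by
  have h := congrArg Complex.re (exp_sum_zero N hN a ha)
  rw [Complex.re_sum] at h
  simp only [Complex.exp_ofReal_mul_I_re, Complex.zero_re] at h
  exact h

private lemma sin_sum_zero (N : ℕ) (hN : 0 < N) (a : ℤ) (ha : ¬ (N:ℤ) ∣ a) :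
    ∑ j ∈ Finset.range N, Real.sin (2 * Real.pi * a * j / N) = 0 := by
  have h := congrArg Complex.im (exp_sum_zero N hN a ha)
  rw [Complex.im_sum] at h
  simp only [Complex.exp_ofReal_mul_I_im, Complex.zero_im] at h
  exact h

private lemma sinS (N : ℕ) (hN : 0 < N) (c a : ℤ) :
    ∑ j ∈ Finset.range N, Real.sin (2 * Real.pi * ((c:ℝ) - (a:ℝ) * j) / N)
      = (if (N:ℤ) ∣ a then (N:ℝ) else 0) * Real.sin (2 * Real.pi * c / N) := by
  have hNR : (N:ℝ) ≠ 0 := Nat.cast_ne_zero.mpr hN.ne'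
  have hterm : ∀ j : ℕ, Real.sin (2 * Real.pi * ((c:ℝ) - (a:ℝ) * j) / N)
      = Real.sin (2 * Real.pi * c / N) * Real.cos (2 * Real.pi * a * j / N)
        - Real.cos (2 * Real.pi * c / N) * Real.sin (2 * Real.pi * a * j / N) := by
    intro j
    rw [← Real.sin_sub]
    congr 1
    field_simp
  rw [Finset.sum_congr rfl fun j _ => hterm j, Finset.sum_sub_distrib, ← Finset.mul_sum,
    ← Finset.mul_sum]
  by_cases hd : (N:ℤ) ∣ a
  · obtain ⟨b, hb⟩ := hd
    have harg : ∀ j : ℕ, 2 * Real.pi * a * j / N = ((b * j : ℤ) : ℝ) * (2 * Real.pi) := by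
      intro j; rw [hb]; push_cast; field_simp
    have hcos : ∀ j : ℕ, Real.cos (2 * Real.pi * a * j / N) = 1 := by
      intro j; rw [harg j, Real.cos_int_mul_two_pi]
    have hsin : ∀ j : ℕ, Real.sin (2 * Real.pi * a * j / N) = 0 := by
      intro j; rw [harg j]
      simpa using Real.sin_add_int_mul_two_pi 0 (b * j)
    rw [Finset.sum_congr rfl fun j _ => hcos j, Finset.sum_congr rfl fun j _ => hsin j,
      if_pos ⟨b, hb⟩]
    simp [mul_comm]
  · rw [cos_sum_zero N hN a hd, sin_sum_zero N hN a hd, if_neg hd]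
    ring

private lemma innerSum10 (N : ℕ) (hN : 2 ≤ N) (m k l : ℕ)
    (hm1 : 1 ≤ m) (hm2 : m ≤ (N - 1) / 2) (hk1 : 1 ≤ k) (hk2 : k ≤ (N - 1) / 2) :
    ∑ j ∈ Finset.range N,
      Real.sin (2 * Real.pi * m * ((l:ℝ) - (j:ℝ)) / N) * Real.cos (2 * Real.pi * k * j / N)
      = if m = k then (N:ℝ) / 2 * Real.sin (2 * Real.pi * k * l / N) else 0 := by
  have hN0 : 0 < N := by omega
  have hNR : (N:ℝ) ≠ 0 := Nat.cast_ne_zero.mpr hN0.ne'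
  have hterm : ∀ j : ℕ,
      Real.sin (2 * Real.pi * m * ((l:ℝ) - (j:ℝ)) / N) * Real.cos (2 * Real.pi * k * j / N)
      = (Real.sin (2 * Real.pi * (((m * l : ℤ):ℝ) - (((m:ℤ) - k : ℤ):ℝ) * j) / N)
        + Real.sin (2 * Real.pi * (((m * l : ℤ):ℝ) - (((m:ℤ) + k : ℤ):ℝ) * j) / N)) / 2 := by
    intro j
    have e1 : 2 * Real.pi * (((m * l : ℤ):ℝ) - (((m:ℤ) - k : ℤ):ℝ) * j) / N
        = 2 * Real.pi * m * ((l:ℝ) - (j:ℝ)) / N + 2 * Real.pi * k * j / N := by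
      push_cast; field_simp; ring
    have e2 : 2 * Real.pi * (((m * l : ℤ):ℝ) - (((m:ℤ) + k : ℤ):ℝ) * j) / N
        = 2 * Real.pi * m * ((l:ℝ) - (j:ℝ)) / N - 2 * Real.pi * k * j / N := by
      push_cast; field_simp; ring
    rw [e1, e2, Real.sin_add, Real.sin_sub]
    ring
  rw [Finset.sum_congr rfl fun j _ => hterm j, ← Finset.sum_div, Finset.sum_add_distrib,
    sinS N hN0 (m * l) ((m:ℤ) - k), sinS N hN0 (m * l) ((m:ℤ) + k)]
  have hsum : ¬ (N:ℤ) ∣ ((m:ℤ) + k) := by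
    intro hd
    have h1 : (m:ℤ) + k ≤ 2 * ((N - 1) / 2 : ℕ) := by push_cast; omega
    have h2 : 2 * ((N - 1) / 2 : ℕ) ≤ (N : ℤ) - 1 := by
      have : 2 * ((N - 1) / 2) ≤ N - 1 := Nat.mul_div_le (N - 1) 2 |>.trans_eq (by omega) |>.trans (le_refl _)
      push_cast; omega
    have h3 : 0 < (m:ℤ) + k := by positivity
    have := Int.le_of_dvd h3 hd
    omega
  rw [if_neg hsum]
  by_cases hmk : m = k
  · subst hmk
    rw [if_pos (by simp : (N:ℤ) ∣ ((m:ℤ) - m))]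
    rw [if_pos rfl]
    have : ((m * l : ℤ):ℝ) = (m:ℝ) * l := by push_cast; ring
    rw [this]
    ring_nf
  · have hdiff : ¬ (N:ℤ) ∣ ((m:ℤ) - k) := by
      intro hd
      have h1 : ((m:ℤ) - k).natAbs < N := by
        have hmN : (m:ℤ) ≤ (N:ℤ) - 1 := by
          have : m ≤ (N - 1) / 2 := hm2
          have : (N - 1) / 2 ≤ N - 1 := Nat.div_le_self _ _
          push_cast; omega
        have hkN : (k:ℤ) ≤ (N:ℤ) - 1 := by
          have : (N - 1) / 2 ≤ N - 1 := Nat.div_le_self _ _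
          push_cast; omega
        omega
      have hne : ((m:ℤ) - k) ≠ 0 := by
        intro h0; apply hmk; omega
      have := Int.le_of_dvd (by omega : (0:ℤ) < ((m:ℤ) - k).natAbs) (Int.natAbs_dvd.mpr hd |> fun h => (Int.dvd_natAbs.mpr hd))
      omega
    rw [if_neg hdiff, if_neg hmk]
    ring

theorem stmt_10 (N : ℕ) (hN : 2 ≤ N)
    (H : Fin N → Fin N → ℝ)
    (hH : ∀ l j : Fin N, H l j =
      (2 / (N : ℝ)) * ∑ k ∈ Finset.Icc 1 ((N - 1) / 2),
        Real.sin (2 * Real.pi * (k : ℝ) * (((l : ℕ) : ℝ) - ((j : ℕ) : ℝ)) / (N : ℝ))) :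
    ∀ k : ℕ, 1 ≤ k → k ≤ (N - 1) / 2 → ∀ l : Fin N,
      (∑ j : Fin N, H l j * Real.cos (2 * Real.pi * (k : ℝ) * ((j : ℕ) : ℝ) / (N : ℝ))) =
        Real.sin (2 * Real.pi * (k : ℝ) * ((l : ℕ) : ℝ) / (N : ℝ)) := by
  intro k hk1 hk2 l
  have hN0 : 0 < N := by omega
  have hNR : (N:ℝ) ≠ 0 := Nat.cast_ne_zero.mpr hN0.ne'
  have step1 : ∀ j : Fin N, H l j * Real.cos (2 * Real.pi * (k : ℝ) * ((j : ℕ) : ℝ) / (N : ℝ))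
      = ∑ m ∈ Finset.Icc 1 ((N - 1) / 2), (2 / (N:ℝ)) *
          (Real.sin (2 * Real.pi * (m : ℝ) * (((l : ℕ) : ℝ) - ((j : ℕ) : ℝ)) / (N : ℝ)) *
            Real.cos (2 * Real.pi * (k : ℝ) * ((j : ℕ) : ℝ) / (N : ℝ))) := by
    intro j
    rw [hH l j, Finset.mul_sum, Finset.sum_mul]
    exact Finset.sum_congr rfl fun m _ => by ring
  calc ∑ j : Fin N, H l j * Real.cos (2 * Real.pi * (k : ℝ) * ((j : ℕ) : ℝ) / (N : ℝ))
      = (2 / (N:ℝ)) * ∑ m ∈ Finset.Icc 1 ((N - 1) / 2), ∑ j : Fin N,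
          Real.sin (2 * Real.pi * (m : ℝ) * (((l : ℕ) : ℝ) - ((j : ℕ) : ℝ)) / (N : ℝ)) *
            Real.cos (2 * Real.pi * (k : ℝ) * ((j : ℕ) : ℝ) / (N : ℝ)) := by
        rw [Finset.sum_congr rfl fun j _ => step1 j, Finset.sum_comm, Finset.mul_sum]
        exact Finset.sum_congr rfl fun m _ => (Finset.mul_sum _ _ _).symm
    _ = (2 / (N:ℝ)) * ∑ m ∈ Finset.Icc 1 ((N - 1) / 2),
          (if m = k then (N:ℝ) / 2 * Real.sin (2 * Real.pi * k * (l:ℕ) / N) else 0) := by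
        congr 1
        apply Finset.sum_congr rfl
        intro m hm
        rw [Finset.mem_Icc] at hm
        rw [Fin.sum_univ_eq_sum_range (fun j => Real.sin (2 * Real.pi * (m : ℝ) * (((l : ℕ) : ℝ) - (j : ℝ)) / (N : ℝ)) * Real.cos (2 * Real.pi * (k : ℝ) * (j : ℝ) / (N : ℝ)))]
        exact innerSum10 N hN m k l hm.1 hm.2 hk1 hk2
    _ = Real.sin (2 * Real.pi * (k : ℝ) * ((l : ℕ) : ℝ) / (N : ℝ)) := by
        rw [Finset.sum_ite_eq' (Finset.Icc 1 ((N - 1) / 2)) k]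
        rw [if_pos (Finset.mem_Icc.mpr ⟨hk1, hk2⟩)]
        field_simp
end

section
/- Let N ≥ 2, K = ⌊(N−1)/2⌋, and let H be the real N×N matrix with entries H_{l,j} = (2/N) Σ_{k=1}^{K} sin(2πk(l−j)/N). Then for every integer k with 1 ≤ k ≤ K and every l in Fin N, Σ_{j=0}^{N−1} H_{l,j} sin(2πkj/N) = −cos(2πkl/N). -/
open Finset

lemma sum_exp_aux (N : ℕ) (hN : 0 < N) (a : ℤ) (ha : ¬ ((N:ℤ) ∣ a)) :
    ∑ j : Fin N, Complex.exp (((2 * Real.pi * (a:ℝ) * ((j:ℕ):ℝ) / (N:ℝ) : ℝ) : ℂ) * Complex.I) = 0 := by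
  have hNC : (N:ℂ) ≠ 0 := Nat.cast_ne_zero.mpr hN.ne'
  set z : ℂ := Complex.exp (((2 * Real.pi * (a:ℝ) / (N:ℝ) : ℝ) : ℂ) * Complex.I) with hz
  have hterm : ∀ j : Fin N,
      Complex.exp (((2 * Real.pi * (a:ℝ) * ((j:ℕ):ℝ) / (N:ℝ) : ℝ) : ℂ) * Complex.I) = z ^ (j:ℕ) := by
    intro j
    rw [hz, ← Complex.exp_nat_mul]
    congr 1
    push_cast
    ring
  simp_rw [hterm]
  rw [Fin.sum_univ_eq_sum_range (fun i => z ^ i) N]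
  have hzN : z ^ N = 1 := by
    rw [hz, ← Complex.exp_nat_mul]
    have h1 : (N:ℂ) * (((2 * Real.pi * (a:ℝ) / (N:ℝ) : ℝ) : ℂ) * Complex.I)
        = (a:ℂ) * (2 * (Real.pi:ℂ) * Complex.I) := by
      push_cast
      field_simp
    rw [h1, Complex.exp_int_mul_two_pi_mul_I]
  have hz1 : z ≠ 1 := by
    intro h
    rw [hz, Complex.exp_eq_one_iff] at h
    obtain ⟨n, hn⟩ := h
    have him := congrArg Complex.im hn
    simp [Complex.mul_im, Complex.mul_re] at him
    have hNR : (N:ℝ) ≠ 0 := Nat.cast_ne_zero.mpr hN.ne'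
    have hπ : Real.pi ≠ 0 := Real.pi_ne_zero
    have h2 : (a:ℝ) = (n:ℝ) * N := by
      field_simp at him
      have h3 : (2*Real.pi) * (a:ℝ) = (2*Real.pi) * ((n:ℝ)*N) := by linear_combination (2*Real.pi) * him
      have := mul_left_cancel₀ (by positivity : (2*Real.pi) ≠ 0) h3
      exact this
    have h4 : a = n * N := by exact_mod_cast h2
    exact ha ⟨n, by rw [h4, mul_comm]⟩
  rw [geom_sum_eq hz1, hzN]
  simp

lemma sum_cos_aux (N : ℕ) (hN : 0 < N) (a : ℤ) (ha : ¬ ((N:ℤ) ∣ a)) :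
    ∑ j : Fin N, Real.cos (2 * Real.pi * (a:ℝ) * ((j:ℕ):ℝ) / (N:ℝ)) = 0 := by
  have h := sum_exp_aux N hN a ha
  calc ∑ j : Fin N, Real.cos (2 * Real.pi * (a:ℝ) * ((j:ℕ):ℝ) / (N:ℝ))
      = ∑ j : Fin N, (Complex.exp (((2 * Real.pi * (a:ℝ) * ((j:ℕ):ℝ) / (N:ℝ) : ℝ) : ℂ) * Complex.I)).re :=
        Finset.sum_congr rfl fun j _ => (Complex.exp_ofReal_mul_I_re _).symm
    _ = 0 := by rw [← Complex.re_sum, h]; simp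

lemma sum_sin_aux (N : ℕ) (hN : 0 < N) (a : ℤ) :
    ∑ j : Fin N, Real.sin (2 * Real.pi * (a:ℝ) * ((j:ℕ):ℝ) / (N:ℝ)) = 0 := by
  by_cases hd : (N:ℤ) ∣ a
  · obtain ⟨c, rfl⟩ := hd
    apply Finset.sum_eq_zero
    intro j _
    have harg : 2 * Real.pi * (((N:ℤ)*c : ℤ):ℝ) * ((j:ℕ):ℝ) / (N:ℝ)
        = ((2 * c * (j:ℕ) : ℤ):ℝ) * Real.pi := by
      have hNR : (N:ℝ) ≠ 0 := Nat.cast_ne_zero.mpr hN.ne'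
      push_cast
      field_simp
    rw [harg]
    exact Real.sin_int_mul_pi _
  · have h := sum_exp_aux N hN a hd
    calc ∑ j : Fin N, Real.sin (2 * Real.pi * (a:ℝ) * ((j:ℕ):ℝ) / (N:ℝ))
        = ∑ j : Fin N, (Complex.exp (((2 * Real.pi * (a:ℝ) * ((j:ℕ):ℝ) / (N:ℝ) : ℝ) : ℂ) * Complex.I)).im :=
          Finset.sum_congr rfl fun j _ => (Complex.exp_ofReal_mul_I_im _).symm
      _ = 0 := by rw [← Complex.im_sum, h]; simp

lemma innerSumXI (N : ℕ) (hN : 2 ≤ N) (m k : ℕ)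
    (hm1 : 1 ≤ m) (hm2 : m ≤ (N - 1) / 2) (hk1 : 1 ≤ k) (hk2 : k ≤ (N - 1) / 2) (l : Fin N) :
    ∑ j : Fin N, Real.sin (2 * Real.pi * (m:ℝ) * (((l:ℕ):ℝ) - ((j:ℕ):ℝ)) / (N:ℝ)) *
        Real.sin (2 * Real.pi * (k:ℝ) * ((j:ℕ):ℝ) / (N:ℝ))
      = if m = k then -((N:ℝ)/2) * Real.cos (2 * Real.pi * (k:ℝ) * ((l:ℕ):ℝ) / (N:ℝ)) else 0 := by
  have hN0 : 0 < N := by omega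
  have hNR : (N:ℝ) ≠ 0 := Nat.cast_ne_zero.mpr hN0.ne'
  set L : ℝ := 2 * Real.pi * (m:ℝ) * ((l:ℕ):ℝ) / (N:ℝ) with hL
  have expand : ∀ j : Fin N,
      Real.sin (2 * Real.pi * (m:ℝ) * (((l:ℕ):ℝ) - ((j:ℕ):ℝ)) / (N:ℝ)) *
        Real.sin (2 * Real.pi * (k:ℝ) * ((j:ℕ):ℝ) / (N:ℝ))
      = (Real.cos L * Real.cos (2 * Real.pi * (((m:ℤ)+(k:ℤ) : ℤ):ℝ) * ((j:ℕ):ℝ) / (N:ℝ))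
        + Real.sin L * Real.sin (2 * Real.pi * (((m:ℤ)+(k:ℤ) : ℤ):ℝ) * ((j:ℕ):ℝ) / (N:ℝ))
        - Real.cos L * Real.cos (2 * Real.pi * (((m:ℤ)-(k:ℤ) : ℤ):ℝ) * ((j:ℕ):ℝ) / (N:ℝ))
        - Real.sin L * Real.sin (2 * Real.pi * (((m:ℤ)-(k:ℤ) : ℤ):ℝ) * ((j:ℕ):ℝ) / (N:ℝ))) / 2 := by
    intro j
    have e1 : 2 * Real.pi * (m:ℝ) * (((l:ℕ):ℝ) - ((j:ℕ):ℝ)) / (N:ℝ)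
        = L - 2 * Real.pi * (m:ℝ) * ((j:ℕ):ℝ) / (N:ℝ) := by rw [hL]; ring
    have e2 : 2 * Real.pi * (((m:ℤ)+(k:ℤ) : ℤ):ℝ) * ((j:ℕ):ℝ) / (N:ℝ)
        = 2 * Real.pi * (m:ℝ) * ((j:ℕ):ℝ) / (N:ℝ) + 2 * Real.pi * (k:ℝ) * ((j:ℕ):ℝ) / (N:ℝ) := by
      push_cast; ring
    have e3 : 2 * Real.pi * (((m:ℤ)-(k:ℤ) : ℤ):ℝ) * ((j:ℕ):ℝ) / (N:ℝ)
        = 2 * Real.pi * (m:ℝ) * ((j:ℕ):ℝ) / (N:ℝ) - 2 * Real.pi * (k:ℝ) * ((j:ℕ):ℝ) / (N:ℝ) := by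
      push_cast; ring
    rw [e1, e2, e3, Real.sin_sub, Real.cos_add, Real.sin_add, Real.cos_sub, Real.sin_sub]
    ring
  rw [Finset.sum_congr rfl fun j _ => expand j]
  rw [← Finset.sum_div]
  simp only [Finset.sum_sub_distrib, Finset.sum_add_distrib, ← Finset.mul_sum]
  rw [sum_sin_aux N hN0 ((m:ℤ)+(k:ℤ)), sum_sin_aux N hN0 ((m:ℤ)-(k:ℤ))]
  have hA : ∑ j : Fin N, Real.cos (2 * Real.pi * (((m:ℤ)+(k:ℤ) : ℤ):ℝ) * ((j:ℕ):ℝ) / (N:ℝ)) = 0 := by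
    apply sum_cos_aux N hN0
    intro hd
    have hle : (N:ℤ) ≤ (m:ℤ)+(k:ℤ) := Int.le_of_dvd (by omega) hd
    omega
  rw [hA]
  by_cases hmk : m = k
  · subst hmk
    have hC : ∑ j : Fin N, Real.cos (2 * Real.pi * (((m:ℤ)-(m:ℤ) : ℤ):ℝ) * ((j:ℕ):ℝ) / (N:ℝ)) = (N:ℝ) := by
      have : ∀ j : Fin N, Real.cos (2 * Real.pi * (((m:ℤ)-(m:ℤ) : ℤ):ℝ) * ((j:ℕ):ℝ) / (N:ℝ)) = 1 := by
        intro j; norm_num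
      rw [Finset.sum_congr rfl fun j _ => this j]
      simp
    rw [hC, if_pos rfl]
    ring
  · have hC : ∑ j : Fin N, Real.cos (2 * Real.pi * (((m:ℤ)-(k:ℤ) : ℤ):ℝ) * ((j:ℕ):ℝ) / (N:ℝ)) = 0 := by
      apply sum_cos_aux N hN0
      intro hd
      have h0 : (m:ℤ) - (k:ℤ) = 0 := Int.eq_zero_of_abs_lt_dvd hd (by rw [abs_lt]; omega)
      omega
    rw [hC, if_neg hmk]
    ring

theorem stmt_11 (N : ℕ) (hN : 2 ≤ N)
    (H : Fin N → Fin N → ℝ)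
    (hH : ∀ l j : Fin N, H l j =
      (2 / (N : ℝ)) * ∑ k ∈ Finset.Icc 1 ((N - 1) / 2),
        Real.sin (2 * Real.pi * (k : ℝ) * (((l : ℕ) : ℝ) - ((j : ℕ) : ℝ)) / (N : ℝ))) :
    ∀ k : ℕ, 1 ≤ k → k ≤ (N - 1) / 2 → ∀ l : Fin N,
      (∑ j : Fin N, H l j * Real.sin (2 * Real.pi * (k : ℝ) * ((j : ℕ) : ℝ) / (N : ℝ))) =
        - Real.cos (2 * Real.pi * (k : ℝ) * ((l : ℕ) : ℝ) / (N : ℝ)) := by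
  intro k hk1 hk2 l
  have hN0 : 0 < N := by omega
  have hNR : (N:ℝ) ≠ 0 := Nat.cast_ne_zero.mpr hN0.ne'
  simp only [hH]
  have step1 : (∑ j : Fin N, (2 / (N : ℝ) * ∑ m ∈ Finset.Icc 1 ((N - 1) / 2),
        Real.sin (2 * Real.pi * (m : ℝ) * (((l : ℕ) : ℝ) - ((j : ℕ) : ℝ)) / (N : ℝ))) *
        Real.sin (2 * Real.pi * (k : ℝ) * ((j : ℕ) : ℝ) / (N : ℝ)))
      = 2 / (N:ℝ) * ∑ m ∈ Finset.Icc 1 ((N - 1) / 2), ∑ j : Fin N,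
          Real.sin (2 * Real.pi * (m : ℝ) * (((l : ℕ) : ℝ) - ((j : ℕ) : ℝ)) / (N : ℝ)) *
            Real.sin (2 * Real.pi * (k : ℝ) * ((j : ℕ) : ℝ) / (N : ℝ)) := by
    rw [Finset.sum_comm, Finset.mul_sum]
    apply Finset.sum_congr rfl
    intro j _
    rw [Finset.mul_sum, Finset.sum_mul, Finset.mul_sum]
    apply Finset.sum_congr rfl
    intro m _
    ring
  rw [step1]
  have step2 : ∀ m ∈ Finset.Icc 1 ((N - 1) / 2), (∑ j : Fin N,
      Real.sin (2 * Real.pi * (m : ℝ) * (((l : ℕ) : ℝ) - ((j : ℕ) : ℝ)) / (N : ℝ)) *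
        Real.sin (2 * Real.pi * (k : ℝ) * ((j : ℕ) : ℝ) / (N : ℝ)))
      = if m = k then -((N:ℝ)/2) * Real.cos (2 * Real.pi * (k:ℝ) * ((l:ℕ):ℝ) / (N:ℝ)) else 0 := by
    intro m hm
    rw [Finset.mem_Icc] at hm
    exact innerSumXI N hN m k hm.1 hm.2 hk1 hk2 l
  rw [Finset.sum_congr rfl step2, Finset.sum_ite_eq' (Finset.Icc 1 ((N - 1) / 2)) k,
    if_pos (Finset.mem_Icc.mpr ⟨hk1, hk2⟩)]
  field_simp
end
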